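/- arXiv:1608.08554 — 2 statements merged into one kernel-verified Lean document; each statement's English description precedes it below -/
import Mathlib

section
/- Let a, b, c, d ∈ F with a·d − b·c = ν for some nonzero ν ∈ ℚ, and let τ = (τ₁, …, τ_g) ∈ ℂ^g be such that σᵢ(c)·τᵢ + σᵢ(d) ≠ 0 for every i. Write the 2g×2g matrix h = P⁻¹ · [[a⋆, b⋆], [c⋆, d⋆]] · P in g×g block form h = [[A, B], [C, D]]. Then the complex matrix C·ι(τ) + D is invertible and (A·ι(τ) + B)·(C·ι(τ) + D)⁻¹ = ι(τ'), where τ' ∈ ℂ^g is given componentwise by τ'ᵢ = (σᵢ(a)·τᵢ + σᵢ(b)) / (σᵢ(c)·τᵢ + σᵢ(d)). (This is the equivariance of the pair (ῑ, ι) asserted in Proposition 3.4.) -/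
/-!
Trace duality says `R'ᵀ * R = 1`, so `P⁻¹ = [[Rᵀ, 0], [0, R'ᵀ]]` and the blocks of `h` are
`A = Rᵀ a⋆ R'`, `B = Rᵀ b⋆ R`, `C = R'ᵀ c⋆ R'`, `D = R'ᵀ d⋆ R`. Since `R' Rᵀ = 1` as well, the
factors `R' Rᵀ` cancel in `C ι(τ) + D = R'ᵀ (c⋆ τ + d⋆) R` and `A ι(τ) + B = Rᵀ (a⋆ τ + b⋆) R`, and
the quotient collapses to `Rᵀ diag(τ') R`: the Möbius action is computed on the diagonal.
-/

open Matrix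

section TraceDuality

variable {K F L ι : Type*} [CommRing K] [CommRing F] [Algebra K F] [CommRing L] [Algebra K L]
  [Fintype ι] [DecidableEq ι]

theorem transpose_mul_eq_one_of_trace_dual (σ : ι → F →+* L)
    (htr : ∀ x : F, algebraMap K L (Algebra.trace K F x) = ∑ i, σ i x) (e estar : ι → F)
    (hdual : ∀ j k, Algebra.trace K F (estar j * e k) = if j = k then 1 else 0)
    {R R' : Matrix ι ι L} (hR : ∀ i j, R i j = σ i (e j)) (hR' : ∀ i j, R' i j = σ i (estar j)) :
    R'ᵀ * R = 1 := by
  ext j k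
  simp_rw [mul_apply, transpose_apply, hR, hR', ← map_mul, ← htr, hdual, one_apply]
  split_ifs <;> simp

end TraceDuality

section Conjugation

variable {n α : Type*} [Fintype n] [DecidableEq n]

theorem mul_conj_mul_of_mul_transpose_eq_one [Semiring α] {R R' : Matrix n n α}
    (hR : R * R'ᵀ = 1) (U V X Y : Matrix n n α) :
    U * X * R * (R'ᵀ * Y * V) = U * (X * Y) * V := by
  simp only [mul_assoc, ← mul_assoc R, hR, one_mul]

theorem mul_diagonal_mul_add_of_mul_transpose_eq_one [Semiring α] {R R' : Matrix n n α}
    (hR : R' * Rᵀ = 1) (U : Matrix n n α) (γ τ δ : n → α) :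
    U * diagonal γ * R' * (Rᵀ * diagonal τ * R) + U * diagonal δ * R =
      U * diagonal (fun i => γ i * τ i + δ i) * R := by
  rw [← diagonal_add, ← diagonal_mul_diagonal]
  simp only [mul_assoc, ← mul_assoc R', hR, one_mul, add_mul, mul_add]

theorem map_mul_diagonal_mul {β : Type*} [NonAssocSemiring α] [NonAssocSemiring β]
    (f : α →+* β) (U V : Matrix n n α) (d : n → α) :
    (U * diagonal d * V).map f = U.map f * diagonal (fun i => f (d i)) * V.map f := by
  rw [Matrix.map_mul, Matrix.map_mul, diagonal_map (map_zero f)]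

variable [CommRing α] {R R' : Matrix n n α}

theorem inv_fromBlocks_zero_zero_of_transpose_mul_eq_one (hRR' : R'ᵀ * R = 1) :
    (fromBlocks R' 0 0 R)⁻¹ = fromBlocks Rᵀ 0 0 R'ᵀ := by
  have hRtR' : Rᵀ * R' = 1 := by simpa using congrArg transpose hRR'
  refine inv_eq_left_inv ?_
  simp [fromBlocks_multiply, hRtR', hRR', fromBlocks_one]

theorem conj_fromBlocks_of_transpose_mul_eq_one (hRR' : R'ᵀ * R = 1)
    (M₁₁ M₁₂ M₂₁ M₂₂ : Matrix n n α) :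
    (fromBlocks R' 0 0 R)⁻¹ * fromBlocks M₁₁ M₁₂ M₂₁ M₂₂ * fromBlocks R' 0 0 R =
      fromBlocks (Rᵀ * M₁₁ * R') (Rᵀ * M₁₂ * R) (R'ᵀ * M₂₁ * R') (R'ᵀ * M₂₂ * R) := by
  simp [inv_fromBlocks_zero_zero_of_transpose_mul_eq_one hRR', fromBlocks_multiply]

theorem inv_conj_of_transpose_mul_eq_one (hRR' : R'ᵀ * R = 1) (X : Matrix n n α) :
    (R'ᵀ * X * R)⁻¹ = R'ᵀ * X⁻¹ * R := by
  rw [Matrix.mul_inv_rev, Matrix.mul_inv_rev, inv_eq_left_inv hRR', inv_eq_right_inv hRR',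
    mul_assoc]

end Conjugation

theorem diagonal_mul_inv_diagonal {n K : Type*} [Fintype n] [DecidableEq n] [Field K]
    (x y : n → K) (hy : ∀ i, y i ≠ 0) :
    diagonal x * (diagonal y)⁻¹ = diagonal (fun i => x i / y i) := by
  have hinv : (diagonal y)⁻¹ = diagonal fun i => (y i)⁻¹ := by
    refine inv_eq_right_inv ?_
    rw [diagonal_mul_diagonal, ← diagonal_one]
    exact congrArg diagonal (funext fun i => mul_inv_cancel₀ (hy i))
  simp only [hinv, diagonal_mul_diagonal, div_eq_mul_inv]

theorem stmt_6_general
    (F : Type*) [Field F] [Algebra ℚ F]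
    (g : ℕ)
    (σ : Fin g → (F →+* ℝ))
    (htr : ∀ x : F, (algebraMap ℚ ℝ) (Algebra.trace ℚ F x) = ∑ i, σ i x)
    (e estar : Fin g → F)
    (hdual : ∀ j k, Algebra.trace ℚ F (estar j * e k) = if j = k then 1 else 0)
    (R R' : Matrix (Fin g) (Fin g) ℝ)
    (hR : ∀ i j, R i j = σ i (e j))
    (hR' : ∀ i j, R' i j = σ i (estar j))
    (P : Matrix (Fin g ⊕ Fin g) (Fin g ⊕ Fin g) ℝ)
    (hP : P = Matrix.fromBlocks R' 0 0 R)
    (a b c d : F)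
    (τ : Fin g → ℂ)
    (hτ : ∀ i, (σ i c : ℂ) * τ i + (σ i d : ℂ) ≠ 0)
    (τ' : Fin g → ℂ)
    (hτ' : ∀ i, τ' i = ((σ i a : ℂ) * τ i + (σ i b : ℂ)) / ((σ i c : ℂ) * τ i + (σ i d : ℂ)))
    (h : Matrix (Fin g ⊕ Fin g) (Fin g ⊕ Fin g) ℝ)
    (hh : h = P⁻¹ * Matrix.fromBlocks
        (Matrix.diagonal fun i => σ i a) (Matrix.diagonal fun i => σ i b)
        (Matrix.diagonal fun i => σ i c) (Matrix.diagonal fun i => σ i d) * P)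
    (A B C D : Matrix (Fin g) (Fin g) ℂ)
    (hA : A = (h.toBlocks₁₁).map (Complex.ofReal ·))
    (hB : B = (h.toBlocks₁₂).map (Complex.ofReal ·))
    (hC : C = (h.toBlocks₂₁).map (Complex.ofReal ·))
    (hD : D = (h.toBlocks₂₂).map (Complex.ofReal ·))
    (ιτ ιτ' : Matrix (Fin g) (Fin g) ℂ)
    (hιτ : ιτ = (R.map (Complex.ofReal ·))ᵀ * Matrix.diagonal τ * R.map (Complex.ofReal ·))
    (hιτ' : ιτ' = (R.map (Complex.ofReal ·))ᵀ * Matrix.diagonal τ' * R.map (Complex.ofReal ·)) :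
    IsUnit (C * ιτ + D) ∧ (A * ιτ + B) * (C * ιτ + D)⁻¹ = ιτ' := by
  have hRR' : R'ᵀ * R = 1 := transpose_mul_eq_one_of_trace_dual σ htr e estar hdual hR hR'
  rw [hP, conj_fromBlocks_of_transpose_mul_eq_one hRR'] at hh
  subst hh
  rw [show (Complex.ofReal ·) = ⇑Complex.ofRealHom from rfl] at hA hB hC hD hιτ hιτ'
  set S := R.map Complex.ofRealHom
  set S' := R'.map Complex.ofRealHom
  have hSS' : S'ᵀ * S = 1 := by
    rw [← transpose_map, ← Matrix.map_mul, hRR', Matrix.map_one _ (map_zero _) (map_one _)]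
  have hSS'_comm : S * S'ᵀ = 1 := mul_eq_one_comm.mp hSS'
  have hS'S : S' * Sᵀ = 1 := by simpa using congrArg transpose hSS'_comm
  simp only [toBlocks_fromBlocks₁₁, toBlocks_fromBlocks₁₂, toBlocks_fromBlocks₂₁,
    toBlocks_fromBlocks₂₂] at hA hB hC hD
  have hnum : A * ιτ + B = Sᵀ * diagonal (fun i => (σ i a : ℂ) * τ i + σ i b) * S := by
    rw [hA, hB, hιτ, map_mul_diagonal_mul, map_mul_diagonal_mul, transpose_map]
    exact mul_diagonal_mul_add_of_mul_transpose_eq_one hS'S _ _ _ _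
  have hden : C * ιτ + D = S'ᵀ * diagonal (fun i => (σ i c : ℂ) * τ i + σ i d) * S := by
    rw [hC, hD, hιτ, map_mul_diagonal_mul, map_mul_diagonal_mul, transpose_map]
    exact mul_diagonal_mul_add_of_mul_transpose_eq_one hS'S _ _ _ _
  refine ⟨?_, ?_⟩
  · rw [hden]
    exact ((IsUnit.of_mul_eq_one S hSS').mul
      (isUnit_diagonal.mpr (Pi.isUnit_iff.mpr fun i => (hτ i).isUnit))).mul
      (IsUnit.of_mul_eq_one_right _ hSS')
  · rw [hnum, hden, inv_conj_of_transpose_mul_eq_one hSS',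
      mul_conj_mul_of_mul_transpose_eq_one hSS'_comm, diagonal_mul_inv_diagonal _ _ hτ, hιτ',
      funext hτ']

/-- Let `a, b, c, d ∈ F` with `a·d − b·c = ν` for some nonzero `ν ∈ ℚ`, and let
`τ ∈ ℂ^g` be such that `σᵢ(c)·τᵢ + σᵢ(d) ≠ 0` for every `i`. Writing
`h = P⁻¹ · [[a⋆, b⋆], [c⋆, d⋆]] · P` in `g × g` block form `h = [[A, B], [C, D]]`, the
complex matrix `C·ι(τ) + D` is invertible and
`(A·ι(τ) + B)·(C·ι(τ) + D)⁻¹ = ι(τ')`, where `τ'ᵢ = (σᵢ(a)·τᵢ + σᵢ(b)) / (σᵢ(c)·τᵢ + σᵢ(d))`.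
(Equivariance of the pair `(ῑ, ι)` asserted in Proposition 3.4.) -/
theorem stmt_6
    (F : Type*) [Field F] [Algebra ℚ F] [FiniteDimensional ℚ F]
    (g : ℕ) (hg : 1 ≤ g) (hdeg : Module.finrank ℚ F = g)
    (σ : Fin g → (F →+* ℝ)) (hσ : Function.Injective σ)
    (htr : ∀ x : F, (algebraMap ℚ ℝ) (Algebra.trace ℚ F x) = ∑ i, σ i x)
    (e estar : Fin g → F)
    (he : ∀ x : F, ∃ q : Fin g → ℚ, x = ∑ i, q i • e i)
    (hdual : ∀ j k, Algebra.trace ℚ F (estar j * e k) = if j = k then 1 else 0)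
    (R R' : Matrix (Fin g) (Fin g) ℝ)
    (hR : ∀ i j, R i j = σ i (e j))
    (hR' : ∀ i j, R' i j = σ i (estar j))
    (P : Matrix (Fin g ⊕ Fin g) (Fin g ⊕ Fin g) ℝ)
    (hP : P = Matrix.fromBlocks R' 0 0 R)
    (a b c d : F) (ν : ℚ) (hν : ν ≠ 0)
    (hdet : a * d - b * c = algebraMap ℚ F ν)
    (τ : Fin g → ℂ)
    (hτ : ∀ i, (σ i c : ℂ) * τ i + (σ i d : ℂ) ≠ 0)
    (τ' : Fin g → ℂ)
    (hτ' : ∀ i, τ' i = ((σ i a : ℂ) * τ i + (σ i b : ℂ)) / ((σ i c : ℂ) * τ i + (σ i d : ℂ)))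
    (h : Matrix (Fin g ⊕ Fin g) (Fin g ⊕ Fin g) ℝ)
    (hh : h = P⁻¹ * Matrix.fromBlocks
        (Matrix.diagonal fun i => σ i a) (Matrix.diagonal fun i => σ i b)
        (Matrix.diagonal fun i => σ i c) (Matrix.diagonal fun i => σ i d) * P)
    (A B C D : Matrix (Fin g) (Fin g) ℂ)
    (hA : A = (h.toBlocks₁₁).map (Complex.ofReal ·))
    (hB : B = (h.toBlocks₁₂).map (Complex.ofReal ·))
    (hC : C = (h.toBlocks₂₁).map (Complex.ofReal ·))
    (hD : D = (h.toBlocks₂₂).map (Complex.ofReal ·))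
    (ιτ ιτ' : Matrix (Fin g) (Fin g) ℂ)
    (hιτ : ιτ = (R.map (Complex.ofReal ·))ᵀ * Matrix.diagonal τ * R.map (Complex.ofReal ·))
    (hιτ' : ιτ' = (R.map (Complex.ofReal ·))ᵀ * Matrix.diagonal τ' * R.map (Complex.ofReal ·)) :
    IsUnit (C * ιτ + D) ∧ (A * ιτ + B) * (C * ιτ + D)⁻¹ = ιτ' :=
  stmt_6_general F g σ htr e estar hdual R R' hR hR' P hP a b c d τ hτ τ' hτ' h hh A B C D hA hB hC
    hD ιτ ιτ' hιτ hιτ'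
end

section
/- Let a, b, c, d ∈ F satisfy a·d − b·c = 1, a ∈ 𝒪_F, d ∈ 𝒪_F, b ∈ 𝒟⁻¹, and c·𝒟⁻¹ ⊆ 𝒪_F (i.e. c lies in the different ideal 𝒟). Then there exists an integer matrix N ∈ M_{2g}(ℤ) such that Nᵀ · ψ · N = ψ (so N ∈ Sp(2g, ℤ)) and such that the image of N in M_{2g}(ℝ) equals P⁻¹ · [[a⋆, b⋆], [c⋆, d⋆]] · P. (This is the assertion that ῑ maps SL(𝒟⁻¹ ⊕ 𝒪_F) into Sp(2g, ℤ).) -/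
open Matrix

/-!
The matrix `P` is symplectic because `Rᵀ * R' = 1` (duality of the two bases), and
`[[a⋆, b⋆], [c⋆, d⋆]]` is symplectic because its blocks are commuting diagonal matrices with
`a⋆ d⋆ - b⋆ c⋆ = 1`; hence so is the conjugate `P⁻¹ [[a⋆, b⋆], [c⋆, d⋆]] P`. Its blocks are
`Rᵀ a⋆ R'`, `Rᵀ b⋆ R`, `R'ᵀ c⋆ R'`, `R'ᵀ d⋆ R`, whose entries are the traces
`Tr(a eⱼ eₖ*)`, `Tr(b eⱼ eₖ)`, `Tr(c eⱼ* eₖ*)`, `Tr(d eⱼ* eₖ)`. These are integers because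
every `eₖ*` lies in `𝒟⁻¹`, the products `a eⱼ`, `d eₖ`, `c eⱼ*` lie in `𝒪_F`, and `b ∈ 𝒟⁻¹`.
-/

namespace Matrix

variable {n α : Type*} [DecidableEq n] [CommRing α]

theorem fromBlocks_zero_one_neg_one_zero : fromBlocks (0 : Matrix n n α) 1 (-1) 0 = -J n α := by
  simp [J, fromBlocks_neg]

variable [Fintype n]

theorem mem_symplecticGroup_iff_transpose_mul_mul {A : Matrix (n ⊕ n) (n ⊕ n) α} :
    A ∈ symplecticGroup n α ↔ Aᵀ * fromBlocks 0 1 (-1) 0 * A = fromBlocks 0 1 (-1) 0 := by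
  rw [fromBlocks_zero_one_neg_one_zero, SymplecticGroup.mem_iff', Matrix.mul_neg, Matrix.neg_mul,
    neg_inj]

theorem map_mem_symplecticGroup_iff {β : Type*} [CommRing β] {f : α →+* β}
    (hf : Function.Injective f) {A : Matrix (n ⊕ n) (n ⊕ n) α} :
    A.map f ∈ symplecticGroup n β ↔ A ∈ symplecticGroup n α := by
  simp_rw [SymplecticGroup.mem_iff, ← transpose_map, ← map_J n f, ← Matrix.map_mul,
    (map_injective hf).eq_iff]

theorem inv_mem_symplecticGroup {A : Matrix (n ⊕ n) (n ⊕ n) α}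
    (hA : A ∈ symplecticGroup n α) : A⁻¹ ∈ symplecticGroup n α :=
  SymplecticGroup.coe_inv' ⟨A, hA⟩ ▸ (⟨A, hA⟩⁻¹ : symplecticGroup n α).2

theorem fromBlocks_diagonal_mem_symplecticGroup {a b c d : n → α}
    (h : ∀ i, a i * d i - b i * c i = 1) :
    fromBlocks (diagonal a) (diagonal b) (diagonal c) (diagonal d) ∈ symplecticGroup n α := by
  simp only [SymplecticGroup.fromBlocks_mem_iff, diagonal_transpose, diagonal_mul_diagonal]
  refine ⟨by simp only [mul_comm], by simp only [mul_comm], ?_⟩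
  rw [diagonal_sub, ← diagonal_one]
  exact congrArg diagonal (funext fun i => by rw [mul_comm (c i), h])

theorem fromBlocks_zero_mem_symplecticGroup {X Y : Matrix n n α} (h : Yᵀ * X = 1) :
    fromBlocks X 0 0 Y ∈ symplecticGroup n α := by
  have h' : Xᵀ * Y = 1 := by simpa using congr_arg transpose h
  simp [SymplecticGroup.fromBlocks_mem_iff, h']

theorem inv_fromBlocks_zero_of_transpose_mul_eq_one {X Y : Matrix n n α} (h : Yᵀ * X = 1) :
    (fromBlocks X 0 0 Y)⁻¹ = fromBlocks Yᵀ 0 0 Xᵀ := by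
  have h' : Xᵀ * Y = 1 := by simpa using congr_arg transpose h
  exact inv_eq_left_inv (by simp [fromBlocks_multiply, h, h'])

theorem fromBlocks_zero_mul_fromBlocks_mul_fromBlocks_zero (X' Y' A B C D X Y : Matrix n n α) :
    fromBlocks X' 0 0 Y' * fromBlocks A B C D * fromBlocks X 0 0 Y =
      fromBlocks (X' * A * X) (X' * B * Y) (Y' * C * X) (Y' * D * Y) := by
  simp [fromBlocks_multiply]

end Matrix

section TraceForm

variable {F ι : Type*} [Field F] [Algebra ℚ F] [Fintype ι] [DecidableEq ι] (σ : ι → F →+* ℝ)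

def embMatrix {κ : Type*} (u : κ → F) : Matrix ι κ ℝ := of fun i j => σ i (u j)

def MemInvDifferent (x : F) : Prop :=
  ∀ y : F, IsIntegral ℤ y → ∃ n : ℤ, Algebra.trace ℚ F (x * y) = n

theorem memInvDifferent_of_dual {e estar : ι → F}
    (hdual : ∀ j k, Algebra.trace ℚ F (estar j * e k) = if j = k then 1 else 0)
    (hspan : ∀ y : F, IsIntegral ℤ y → ∃ m : ι → ℤ, y = ∑ i, m i • e i) (k : ι) :
    MemInvDifferent (estar k) := by
  intro y hy
  obtain ⟨m, rfl⟩ := hspan y hy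
  refine ⟨m k, ?_⟩
  simp only [Finset.mul_sum, mul_smul_comm, map_sum, map_zsmul, hdual]
  simp

variable {σ} (htr : ∀ x : F, algebraMap ℚ ℝ (Algebra.trace ℚ F x) = ∑ i, σ i x)
include htr

theorem embMatrix_transpose_mul_diagonal_mul {κ κ' : Type*} (x : F) (u : κ → F) (v : κ' → F) :
    (embMatrix σ u)ᵀ * diagonal (fun i => σ i x) * embMatrix σ v =
      of fun j k => algebraMap ℚ ℝ (Algebra.trace ℚ F (x * u j * v k)) := by
  ext j k
  rw [of_apply, htr, mul_apply]
  simp only [mul_diagonal, transpose_apply, embMatrix, of_apply, map_mul]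
  exact Finset.sum_congr rfl fun i _ => by ring

theorem embMatrix_transpose_mul_embMatrix_eq_one {e estar : ι → F}
    (hdual : ∀ j k, Algebra.trace ℚ F (estar j * e k) = if j = k then 1 else 0) :
    (embMatrix σ e)ᵀ * embMatrix σ estar = 1 := by
  have h := embMatrix_transpose_mul_diagonal_mul htr 1 e estar
  simp only [map_one, diagonal_one, Matrix.mul_one, one_mul] at h
  ext j k
  simp [h, mul_comm (e j), hdual, one_apply, eq_comm, apply_ite]

theorem exists_map_intCast_eq_embMatrix_transpose_mul_diagonal_mul {κ κ' : Type*} {x : F}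
    {u : κ → F} {v : κ' → F} (hx : ∀ j k, ∃ n : ℤ, Algebra.trace ℚ F (x * u j * v k) = n) :
    ∃ N : Matrix κ κ' ℤ, N.map (Int.cast : ℤ → ℝ) =
      (embMatrix σ u)ᵀ * diagonal (fun i => σ i x) * embMatrix σ v := by
  choose N hN using hx
  refine ⟨of N, ?_⟩
  ext j k
  simp [embMatrix_transpose_mul_diagonal_mul htr, hN]

end TraceForm

theorem stmt_8_general
    (F : Type*) [Field F] [Algebra ℚ F]
    (g : ℕ)
    (σ : Fin g → (F →+* ℝ))
    (htr : ∀ x : F, (algebraMap ℚ ℝ) (Algebra.trace ℚ F x) = ∑ i, σ i x)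
    (e estar : Fin g → F)
    (hdual : ∀ j k, Algebra.trace ℚ F (estar j * e k) = if j = k then 1 else 0)
    (hint : ∀ i, IsIntegral ℤ (e i))
    (hspan : ∀ y : F, IsIntegral ℤ y → ∃ m : Fin g → ℤ, y = ∑ i, m i • e i)
    (R R' : Matrix (Fin g) (Fin g) ℝ)
    (hR : ∀ i j, R i j = σ i (e j))
    (hR' : ∀ i j, R' i j = σ i (estar j))
    (P : Matrix (Fin g ⊕ Fin g) (Fin g ⊕ Fin g) ℝ)
    (hP : P = Matrix.fromBlocks R' 0 0 R)
    (ψℤ : Matrix (Fin g ⊕ Fin g) (Fin g ⊕ Fin g) ℤ)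
    (hψℤ : ψℤ = Matrix.fromBlocks 0 1 (-1) 0)
    (a b c d : F)
    (hdet : a * d - b * c = 1)
    (ha : IsIntegral ℤ a) (hd : IsIntegral ℤ d)
    (hb : ∀ y : F, IsIntegral ℤ y → ∃ n : ℤ, Algebra.trace ℚ F (b * y) = n)
    (hc : ∀ x : F, (∀ y : F, IsIntegral ℤ y → ∃ n : ℤ, Algebra.trace ℚ F (x * y) = n) →
      IsIntegral ℤ (c * x)) :
    ∃ N : Matrix (Fin g ⊕ Fin g) (Fin g ⊕ Fin g) ℤ,
      Nᵀ * ψℤ * N = ψℤ ∧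
      N.map (Int.cast : ℤ → ℝ) = P⁻¹ * Matrix.fromBlocks
        (Matrix.diagonal fun i => σ i a) (Matrix.diagonal fun i => σ i b)
        (Matrix.diagonal fun i => σ i c) (Matrix.diagonal fun i => σ i d) * P := by
  obtain rfl : R = embMatrix σ e := Matrix.ext hR
  obtain rfl : R' = embMatrix σ estar := Matrix.ext hR'
  subst hψℤ
  have hRR' := embMatrix_transpose_mul_embMatrix_eq_one htr hdual
  have hestar := memInvDifferent_of_dual hdual hspan
  obtain ⟨A, hA⟩ := exists_map_intCast_eq_embMatrix_transpose_mul_diagonal_mul htr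
    (x := a) (u := e) (v := estar) fun j k => by
      rw [mul_comm]; exact hestar k _ (ha.mul (hint j))
  obtain ⟨B, hB⟩ := exists_map_intCast_eq_embMatrix_transpose_mul_diagonal_mul htr
    (x := b) (u := e) (v := e) fun j k => by
      rw [mul_assoc]; exact hb _ ((hint j).mul (hint k))
  obtain ⟨C, hC⟩ := exists_map_intCast_eq_embMatrix_transpose_mul_diagonal_mul htr
    (x := c) (u := estar) (v := estar) fun j k => by
      rw [mul_comm]; exact hestar k _ (hc _ (hestar j))
  obtain ⟨D, hD⟩ := exists_map_intCast_eq_embMatrix_transpose_mul_diagonal_mul htr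
    (x := d) (u := estar) (v := e) fun j k => by
      rw [mul_comm d, mul_assoc]; exact hestar j _ (hd.mul (hint k))
  have hN : (fromBlocks A B C D).map (Int.cast : ℤ → ℝ) = P⁻¹ * fromBlocks
      (diagonal fun i => σ i a) (diagonal fun i => σ i b)
      (diagonal fun i => σ i c) (diagonal fun i => σ i d) * P := by
    rw [hP, inv_fromBlocks_zero_of_transpose_mul_eq_one hRR',
      fromBlocks_zero_mul_fromBlocks_mul_fromBlocks_zero, fromBlocks_map, hA, hB, hC, hD]
  refine ⟨fromBlocks A B C D, ?_, hN⟩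
  have hPsymp : P ∈ symplecticGroup (Fin g) ℝ := hP ▸ fromBlocks_zero_mem_symplecticGroup hRR'
  have hMsymp := fromBlocks_diagonal_mem_symplecticGroup (a := fun i => σ i a)
    (b := fun i => σ i b) (c := fun i => σ i c) (d := fun i => σ i d) fun i => by
      rw [← map_mul, ← map_mul, ← map_sub, hdet, map_one]
  rw [← mem_symplecticGroup_iff_transpose_mul_mul,
    ← map_mem_symplecticGroup_iff (f := Int.castRingHom ℝ) Int.cast_injective]
  exact hN ▸ mul_mem (mul_mem (inv_mem_symplecticGroup hPsymp) hMsymp) hPsymp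

/-- Let `a, b, c, d ∈ F` satisfy `a·d − b·c = 1`, with `a, d ∈ 𝒪_F`,
`b ∈ 𝒟⁻¹` and `c·𝒟⁻¹ ⊆ 𝒪_F` (i.e. `c ∈ 𝒟`). Then there exists an integer matrix
`N ∈ M_{2g}(ℤ)` with `Nᵀ · ψ · N = ψ` (so `N ∈ Sp(2g, ℤ)`) whose image in `M_{2g}(ℝ)`
equals `P⁻¹ · [[a⋆, b⋆], [c⋆, d⋆]] · P`. (`ῑ` maps `SL(𝒟⁻¹ ⊕ 𝒪_F)` into `Sp(2g, ℤ)`.) -/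
theorem stmt_8
    (F : Type*) [Field F] [Algebra ℚ F] [FiniteDimensional ℚ F]
    (g : ℕ) (hg : 1 ≤ g) (hdeg : Module.finrank ℚ F = g)
    (σ : Fin g → (F →+* ℝ)) (hσ : Function.Injective σ)
    (htr : ∀ x : F, (algebraMap ℚ ℝ) (Algebra.trace ℚ F x) = ∑ i, σ i x)
    (e estar : Fin g → F)
    (hdual : ∀ j k, Algebra.trace ℚ F (estar j * e k) = if j = k then 1 else 0)
    (hint : ∀ i, IsIntegral ℤ (e i))
    (hspan : ∀ y : F, IsIntegral ℤ y → ∃ m : Fin g → ℤ, y = ∑ i, m i • e i)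
    (R R' : Matrix (Fin g) (Fin g) ℝ)
    (hR : ∀ i j, R i j = σ i (e j))
    (hR' : ∀ i j, R' i j = σ i (estar j))
    (ψ P : Matrix (Fin g ⊕ Fin g) (Fin g ⊕ Fin g) ℝ)
    (hψ : ψ = Matrix.fromBlocks 0 1 (-1) 0)
    (hP : P = Matrix.fromBlocks R' 0 0 R)
    (ψℤ : Matrix (Fin g ⊕ Fin g) (Fin g ⊕ Fin g) ℤ)
    (hψℤ : ψℤ = Matrix.fromBlocks 0 1 (-1) 0)
    (a b c d : F)
    (hdet : a * d - b * c = 1)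
    (ha : IsIntegral ℤ a) (hd : IsIntegral ℤ d)
    (hb : ∀ y : F, IsIntegral ℤ y → ∃ n : ℤ, Algebra.trace ℚ F (b * y) = n)
    (hc : ∀ x : F, (∀ y : F, IsIntegral ℤ y → ∃ n : ℤ, Algebra.trace ℚ F (x * y) = n) →
      IsIntegral ℤ (c * x)) :
    ∃ N : Matrix (Fin g ⊕ Fin g) (Fin g ⊕ Fin g) ℤ,
      Nᵀ * ψℤ * N = ψℤ ∧
      N.map (Int.cast : ℤ → ℝ) = P⁻¹ * Matrix.fromBlocks
        (Matrix.diagonal fun i => σ i a) (Matrix.diagonal fun i => σ i b)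
        (Matrix.diagonal fun i => σ i c) (Matrix.diagonal fun i => σ i d) * P :=
  stmt_8_general F g σ htr e estar hdual hint hspan R R' hR hR' P hP ψℤ hψℤ a b c d hdet ha hd hb hc
end
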